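/- arXiv:2103.08686 — 2 statements merged into one kernel-verified Lean document; each statement's English description precedes it below -/
import Mathlib

section
/- In an exact Mal'tsev category, for objects x and y the map sending a co-relation (a jointly epimorphic pair of strong epimorphisms x ↠ u ↞ y, up to isomorphism) to the fiber product x ×_u y ⊆ x × y is a bijection onto the set of relations r ⊆ x × y whose projections to x and to y are both strong epimorphisms; its inverse sends r to the pushout x ⊔_r y. -/
open CategoryTheory CategoryTheory.Limits

universe v u

variable {C : Type u} [Category.{v} C] [HasFiniteLimits C] [HasImages C]

/-- The composition `s ∘ r` of relations. -/
noncomputable def relComp {x y z : C} (r : Subobject (x ⨯ y)) (s : Subobject (y ⨯ z)) :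
    Subobject (x ⨯ z) :=
  Subobject.mk (image.ι (prod.lift
    (pullback.fst (r.arrow ≫ prod.snd) (s.arrow ≫ prod.fst) ≫ r.arrow ≫ prod.fst)
    (pullback.snd (r.arrow ≫ prod.snd) (s.arrow ≫ prod.fst) ≫ s.arrow ≫ prod.snd)))

/-- The opposite relation `r∨` of a relation `r ⊆ x × y`. -/
noncomputable def oppRel {x y : C} (r : Subobject (x ⨯ y)) : Subobject (y ⨯ x) :=
  Subobject.mk (r.arrow ≫ (prod.braiding x y).hom)

instance fiber_mono {x y u : C} (a : x ⟶ u) (b : y ⟶ u) :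
    Mono (prod.lift (pullback.fst a b) (pullback.snd a b)) := by
  constructor
  intro Z f g h
  apply pullback.hom_ext
  · first
      | simpa using congrArg (· ≫ (prod.fst : x ⨯ y ⟶ _)) h
      | simpa using h =≫ prod.fst
      | (have h' := congrArg (· ≫ prod.fst) h; simp only [prod.comp_lift] at h'; erw [prod.lift_fst, prod.lift_fst] at h'; exact h')
  · first
      | simpa using congrArg (· ≫ (prod.snd : x ⨯ y ⟶ _)) h
      | simpa using h =≫ prod.snd
      | (have h' := congrArg (· ≫ prod.snd) h; simp only [prod.comp_lift] at h'; erw [prod.lift_snd, prod.lift_snd] at h'; exact h')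

/-- The fiber product `x ×_u y` of a cospan `a : x ⟶ u`, `b : y ⟶ u`, as a relation
`x ×_u y ⊆ x × y`. -/
noncomputable def fiberRel {x y u : C} (a : x ⟶ u) (b : y ⟶ u) : Subobject (x ⨯ y) :=
  Subobject.mk (prod.lift (pullback.fst a b) (pullback.snd a b))

/-- `r` belongs to `R(x,y)`: both projections of the relation `r ⊆ x × y` are strong
epimorphisms. -/
def SurjRel {x y : C} (r : Subobject (x ⨯ y)) : Prop :=
  StrongEpi (r.arrow ≫ prod.fst) ∧ StrongEpi (r.arrow ≫ prod.snd)

/-!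
In a regular category a strong epimorphism coequalizes its kernel pair, so the pullback square of
two strong epimorphisms `a : x ↠ u`, `b : y ↠ u` is also a pushout square: the cospan is recovered
from `x ×_u y`, which gives injectivity. For surjectivity, let `r` have strongly epimorphic
projections `p`, `q`. The relation `r ∘ r°` on `x` is reflexive, hence an equivalence relation
(Mal'tsev), hence the kernel pair of a strong epimorphism `e : x ↠ u` (exactness). Then `p ≫ e`
coequalizes the kernel pair of `q` and descends to `b : y ↠ u`. Clearly `r ⊆ x ×_u y`; the reverse
inclusion is difunctionality of `r`, i.e. the Mal'tsev property of the reflexive relation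
`{(s, t) | (p s, q t) ∈ r}` on `r`. Everything is argued with generalized elements, an existential
being eliminated by passing to a cover along a pulled-back strong epimorphism.
-/

attribute [local simp] prod.lift_fst prod.lift_snd prod.lift_fst_assoc prod.lift_snd_assoc
  pullback.lift_fst pullback.lift_snd pullback.lift_fst_assoc pullback.lift_snd_assoc

section

variable {D : Type*} [Category D]

theorem factors_of_strongEpi_comp {X Y T : D} {P : Subobject Y} {f : X ⟶ Y} (c : T ⟶ X)
    [StrongEpi c] (h : P.Factors (c ≫ f)) : P.Factors f :=
  let sq : CommSq (P.factorThru _ h) c P.arrow f := ⟨P.factorThru_arrow _ h⟩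
  sq.fac_right ▸ Subobject.factors_comp_arrow sq.lift

theorem mk_factors_iff_exists {A B T : D} (m : A ⟶ B) [Mono m] (h : T ⟶ B) :
    (Subobject.mk m).Factors h ↔ ∃ k : T ⟶ A, k ≫ m = h :=
  Iff.rfl

theorem mk_le_of_factors {A B : D} {f : A ⟶ B} [Mono f] {P : Subobject B} (h : P.Factors f) :
    Subobject.mk f ≤ P :=
  Subobject.mk_le_of_comm (P.factorThru _ h) (P.factorThru_arrow _ h)

theorem factors_iff_factors_lift {x y T : D} [HasBinaryProduct x y] (P : Subobject (x ⨯ y))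
    (h : T ⟶ x ⨯ y) : P.Factors h ↔ P.Factors (prod.lift (h ≫ prod.fst) (h ≫ prod.snd)) := by
  rw [← prod.comp_lift, prod.lift_fst_snd, Category.comp_id]

theorem factors_lift_comp_arrow {x y T : D} [HasBinaryProduct x y] (P : Subobject (x ⨯ y))
    (t : T ⟶ P) : P.Factors (prod.lift (t ≫ P.arrow ≫ prod.fst) (t ≫ P.arrow ≫ prod.snd)) := by
  convert Subobject.factors_comp_arrow t using 1
  ext <;> simp

theorem strongEpi_arrow_fst_of_factors {x y T : D} [HasBinaryProduct x y] {P : Subobject (x ⨯ y)}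
    {f : T ⟶ x} {g : T ⟶ y} (h : P.Factors (prod.lift f g)) [StrongEpi f] :
    StrongEpi (P.arrow ≫ prod.fst) := by
  have : StrongEpi (P.factorThru _ h ≫ P.arrow ≫ prod.fst) := by simpa
  exact strongEpi_of_strongEpi (P.factorThru _ h) _

theorem strongEpi_arrow_snd_of_factors {x y T : D} [HasBinaryProduct x y] {P : Subobject (x ⨯ y)}
    {f : T ⟶ x} {g : T ⟶ y} (h : P.Factors (prod.lift f g)) [StrongEpi g] :
    StrongEpi (P.arrow ≫ prod.snd) := by
  have : StrongEpi (P.factorThru _ h ≫ P.arrow ≫ prod.snd) := by simpa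
  exact strongEpi_of_strongEpi (P.factorThru _ h) _

variable [HasFiniteLimits D]

variable (D) in
def StrongEpiPullbackStable : Prop :=
  ∀ ⦃X Y Z : D⦄ (f : X ⟶ Z) (g : Y ⟶ Z), StrongEpi f → StrongEpi (pullback.snd f g)

theorem StrongEpiPullbackStable.exists_lift (hreg : StrongEpiPullbackStable D) {X Y T : D}
    (e : X ⟶ Y) [StrongEpi e] (k : T ⟶ Y) :
    ∃ (T' : D) (c : T' ⟶ T) (t : T' ⟶ X), StrongEpi c ∧ t ≫ e = c ≫ k :=
  ⟨_, pullback.snd e k, pullback.fst e k, hreg e k ‹_›, pullback.condition⟩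

theorem fiberRel_condition {x y u : D} (a : x ⟶ u) (b : y ⟶ u) :
    (fiberRel a b).arrow ≫ prod.fst ≫ a = (fiberRel a b).arrow ≫ prod.snd ≫ b := by
  rw [fiberRel, ← Subobject.underlyingIso_hom_comp_eq_mk]
  simp [pullback.condition]

theorem fiberRel_factors_iff {x y u T : D} (a : x ⟶ u) (b : y ⟶ u) (f : T ⟶ x) (g : T ⟶ y) :
    (fiberRel a b).Factors (prod.lift f g) ↔ f ≫ a = g ≫ b := by
  refine ⟨fun h => ?_, fun h => ⟨pullback.lift f g h, by ext <;> simp⟩⟩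
  calc f ≫ a = (fiberRel a b).factorThru _ h ≫ (fiberRel a b).arrow ≫ prod.fst ≫ a := by simp
    _ = (fiberRel a b).factorThru _ h ≫ (fiberRel a b).arrow ≫ prod.snd ≫ b := by
      rw [fiberRel_condition]
    _ = g ≫ b := by simp

theorem StrongEpiPullbackStable.surjRel_fiberRel (hreg : StrongEpiPullbackStable D) {x y u : D}
    (a : x ⟶ u) (b : y ⟶ u) [StrongEpi a] [StrongEpi b] : SurjRel (fiberRel a b) :=
  have := hreg a b ‹_›
  have := hreg b a ‹_›
  ⟨strongEpi_arrow_fst_of_factors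
      ((fiberRel_factors_iff a b _ (pullback.fst b a)).2 pullback.condition.symm),
    strongEpi_arrow_snd_of_factors ((fiberRel_factors_iff a b _ _).2 pullback.condition)⟩

theorem oppRel_factors_iff {x y T : D} (r : Subobject (x ⨯ y)) (f : T ⟶ y) (g : T ⟶ x) :
    (oppRel r).Factors (prod.lift f g) ↔ r.Factors (prod.lift g f) := by
  rw [oppRel, mk_factors_iff_exists]
  refine ⟨fun ⟨k, hk⟩ => ?_, fun h => ⟨r.factorThru _ h, by simp⟩⟩
  have hk' : k ≫ r.arrow = prod.lift g f := by
    rw [← cancel_mono (prod.braiding x y).hom, Category.assoc, hk]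
    simp
  exact hk' ▸ Subobject.factors_comp_arrow k

variable [HasImages D]

theorem StrongEpiPullbackStable.exists_comp_eq (hreg : StrongEpiPullbackStable D) {X U Z : D}
    (f : X ⟶ U) [StrongEpi f] (g : X ⟶ Z)
    (hg : ∀ ⦃T : D⦄ (t₁ t₂ : T ⟶ X), t₁ ≫ f = t₂ ≫ f → t₁ ≫ g = t₂ ≫ g) :
    ∃ h : U ⟶ Z, f ≫ h = g := by
  set e := factorThruImage (prod.lift f g)
  set m := image.ι (prod.lift f g)
  have he : ∀ {T : D} (t : T ⟶ X), t ≫ e ≫ m = prod.lift (t ≫ f) (t ≫ g) := by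
    intro T t
    simp [e, m]
  have hfac : e ≫ m ≫ prod.fst = f := by simpa using congrArg (· ≫ prod.fst) (he (𝟙 X))
  have : StrongEpi (m ≫ prod.fst) :=
    have : StrongEpi (e ≫ m ≫ prod.fst) := by rw [hfac]; infer_instance
    strongEpi_of_strongEpi e _
  -- the image of `(f, g)` is the graph of the sought morphism: its projection to `U` is monic
  have : Mono (m ≫ prod.fst) := by
    refine ⟨fun {T} k₁ k₂ hk => ?_⟩
    obtain ⟨T₁, c₁, x₁, hc₁, hx₁⟩ := hreg.exists_lift e k₁
    obtain ⟨T₂, c₂, x₂, hc₂, hx₂⟩ := hreg.exists_lift e (c₁ ≫ k₂)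
    have hf : (c₂ ≫ x₁) ≫ f = x₂ ≫ f := by
      rw [← hfac]
      simp only [Category.assoc]
      rw [reassoc_of% hx₁, reassoc_of% hx₂, hk]
    rw [← cancel_epi c₁, ← cancel_epi c₂, ← cancel_mono m]
    calc (c₂ ≫ c₁ ≫ k₁) ≫ m = (c₂ ≫ x₁) ≫ e ≫ m := by simp [reassoc_of% hx₁]
      _ = x₂ ≫ e ≫ m := by rw [he, he, hf, hg _ _ hf]
      _ = (c₂ ≫ c₁ ≫ k₂) ≫ m := by simp [reassoc_of% hx₂]
  have := isIso_of_mono_of_strongEpi (m ≫ prod.fst)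
  refine ⟨inv (m ≫ prod.fst) ≫ m ≫ prod.snd, ?_⟩
  calc f ≫ inv (m ≫ prod.fst) ≫ m ≫ prod.snd
      = (e ≫ m ≫ prod.fst) ≫ inv (m ≫ prod.fst) ≫ m ≫ prod.snd := by rw [hfac]
    _ = e ≫ m ≫ prod.snd := by simp
    _ = g := by simpa using congrArg (· ≫ prod.snd) (he (𝟙 X))

theorem StrongEpiPullbackStable.isPushout_fiberRel (hreg : StrongEpiPullbackStable D) {x y u : D}
    (a : x ⟶ u) (b : y ⟶ u) [StrongEpi a] [StrongEpi b] :
    IsPushout ((fiberRel a b).arrow ≫ prod.fst) ((fiberRel a b).arrow ≫ prod.snd) a b := by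
  set p := (fiberRel a b).arrow ≫ prod.fst
  set q := (fiberRel a b).arrow ≫ prod.snd
  have hdesc : ∀ {Z : D} (f : x ⟶ Z) (g : y ⟶ Z), p ≫ f = q ≫ g →
      ∃ h : u ⟶ Z, a ≫ h = f ∧ b ≫ h = g := by
    intro Z f g hfg
    have hpt : ∀ {T : D} (s : T ⟶ x) (t : T ⟶ y), s ≫ a = t ≫ b → s ≫ f = t ≫ g := by
      intro T s t hst
      have h := (fiberRel_factors_iff a b s t).2 hst
      calc s ≫ f = (fiberRel a b).factorThru _ h ≫ p ≫ f := by simp [p]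
        _ = (fiberRel a b).factorThru _ h ≫ q ≫ g := by rw [hfg]
        _ = t ≫ g := by simp [q]
    obtain ⟨h, hh⟩ := hreg.exists_comp_eq a f fun T t₁ t₂ ht => by
      obtain ⟨T', c, t, hc, ht'⟩ := hreg.exists_lift b (t₁ ≫ a)
      rw [← cancel_epi c]
      calc c ≫ t₁ ≫ f = t ≫ g := by simpa using hpt (c ≫ t₁) t (by simp [ht'])
        _ = c ≫ t₂ ≫ f := by simpa using (hpt (c ≫ t₂) t (by simp [ht', ht])).symm
    obtain ⟨T, c, s, hc, hs⟩ := hreg.exists_lift a b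
    refine ⟨h, hh, ?_⟩
    rw [← cancel_epi c, ← reassoc_of% hs, hh, hpt s c hs]
  refine IsPushout.of_isColimit' ⟨by simpa [p, q] using fiberRel_condition a b⟩
    (PushoutCocone.IsColimit.mk _ (fun s => (hdesc _ _ s.condition).choose)
      (fun s => (hdesc _ _ s.condition).choose_spec.1)
      (fun s => (hdesc _ _ s.condition).choose_spec.2) fun s m hm _ => ?_)
  rw [← cancel_epi a, hm, (hdesc _ _ s.condition).choose_spec.1]

theorem factors_relComp {x y z T : D} {r : Subobject (x ⨯ y)} {s : Subobject (y ⨯ z)}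
    {f : T ⟶ x} {m : T ⟶ y} {g : T ⟶ z} (hr : r.Factors (prod.lift f m))
    (hs : s.Factors (prod.lift m g)) : (relComp r s).Factors (prod.lift f g) := by
  let w := pullback.lift (f := r.arrow ≫ prod.snd) (g := s.arrow ≫ prod.fst)
    (r.factorThru _ hr) (s.factorThru _ hs) (by simp)
  refine (mk_factors_iff_exists _ _).2 ⟨w ≫ factorThruImage _, ?_⟩
  ext <;> simp [w]

theorem StrongEpiPullbackStable.exists_of_factors_relComp (hreg : StrongEpiPullbackStable D)
    {x y z T : D} {r : Subobject (x ⨯ y)} {s : Subobject (y ⨯ z)} {f : T ⟶ x} {g : T ⟶ z}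
    (h : (relComp r s).Factors (prod.lift f g)) :
    ∃ (T' : D) (c : T' ⟶ T) (m : T' ⟶ y), StrongEpi c ∧
      r.Factors (prod.lift (c ≫ f) m) ∧ s.Factors (prod.lift m (c ≫ g)) := by
  set P := pullback (r.arrow ≫ prod.snd) (s.arrow ≫ prod.fst)
  set L : P ⟶ x ⨯ z := prod.lift (pullback.fst _ _ ≫ r.arrow ≫ prod.fst)
    (pullback.snd _ _ ≫ s.arrow ≫ prod.snd)
  obtain ⟨k, hk⟩ := (mk_factors_iff_exists (image.ι L) _).1 h
  obtain ⟨T', c, w, hc, hw⟩ := hreg.exists_lift (factorThruImage L) k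
  have hwc : w ≫ L = c ≫ prod.lift f g := by
    rw [← image.fac L, reassoc_of% hw, hk, prod.comp_lift]
  refine ⟨T', c, w ≫ pullback.fst _ _ ≫ r.arrow ≫ prod.snd, hc, ?_, ?_⟩
  · convert factors_lift_comp_arrow r (w ≫ pullback.fst _ _) using 2
    · simpa [L] using (hwc =≫ prod.fst).symm
    · simp
  · convert factors_lift_comp_arrow s (w ≫ pullback.snd _ _) using 2
    · simp [pullback.condition]
    · simpa [L] using (hwc =≫ prod.snd).symm

variable (D) in
def IsMaltsev : Prop :=
  ∀ (z : D) (s : Subobject (z ⨯ z)), Subobject.mk (diag z) ≤ s → oppRel s = s ∧ relComp s s = s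

variable (D) in
def EquivalenceRelationsEffective : Prop :=
  ∀ (z : D) (s : Subobject (z ⨯ z)), Subobject.mk (diag z) ≤ s → oppRel s = s →
    relComp s s = s → ∃ (w : D) (e : z ⟶ w), StrongEpi e ∧ s = fiberRel e e

theorem IsMaltsev.factors_trans (hMal : IsMaltsev D) {z T : D} {s : Subobject (z ⨯ z)}
    (hs : Subobject.mk (diag z) ≤ s) {f g h : T ⟶ z} (hfg : s.Factors (prod.lift f g))
    (hgh : s.Factors (prod.lift g h)) : s.Factors (prod.lift f h) :=
  (hMal z s hs).2 ▸ factors_relComp hfg hgh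

theorem IsMaltsev.difunctional (hMal : IsMaltsev D) {x y T : D} (r : Subobject (x ⨯ y))
    {x₁ x₂ : T ⟶ x} {y₁ y₂ : T ⟶ y} (h₁₁ : r.Factors (prod.lift x₁ y₁))
    (h₂₁ : r.Factors (prod.lift x₂ y₁)) (h₂₂ : r.Factors (prod.lift x₂ y₂)) :
    r.Factors (prod.lift x₁ y₂) := by
  -- `S` relates `s, t ∈ r` when `(fst s, snd t) ∈ r`; it is reflexive, hence transitive.
  let S := (Subobject.pullback (prod.map (r.arrow ≫ prod.fst) (r.arrow ≫ prod.snd))).obj r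
  have hS : ∀ {T' : D} (s t : T' ⟶ r), S.Factors (prod.lift s t) ↔
      r.Factors (prod.lift (s ≫ r.arrow ≫ prod.fst) (t ≫ r.arrow ≫ prod.snd)) := by
    intro T' s t
    rw [pullback_factors_iff, prod.lift_map]
  have hrefl : Subobject.mk (diag (r : D)) ≤ S :=
    mk_le_of_factors <| (hS _ _).2 (by simpa using factors_lift_comp_arrow r (𝟙 _))
  have := hMal.factors_trans hrefl ((hS (r.factorThru _ h₁₁) (r.factorThru _ h₂₁)).2 (by simpa))
    ((hS (r.factorThru _ h₂₁) (r.factorThru _ h₂₂)).2 (by simpa))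
  simpa using (hS _ _).1 this

theorem factors_relComp_oppRel {x y T : D} {r : Subobject (x ⨯ y)} {f g : T ⟶ x} {m : T ⟶ y}
    (hf : r.Factors (prod.lift f m)) (hg : r.Factors (prod.lift g m)) :
    (relComp r (oppRel r)).Factors (prod.lift f g) :=
  factors_relComp hf ((oppRel_factors_iff r m g).2 hg)

theorem diag_le_relComp_oppRel {x y : D} (r : Subobject (x ⨯ y))
    [StrongEpi (r.arrow ≫ prod.fst)] : Subobject.mk (diag x) ≤ relComp r (oppRel r) := by
  have hr := factors_lift_comp_arrow r (𝟙 _)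
  exact mk_le_of_factors <|
    factors_of_strongEpi_comp (r.arrow ≫ prod.fst) (by simpa using factors_relComp_oppRel hr hr)

theorem fiberRel_le_of_relComp_oppRel_eq (hreg : StrongEpiPullbackStable D) (hMal : IsMaltsev D)
    {x y u : D} {r : Subobject (x ⨯ y)} [StrongEpi (r.arrow ≫ prod.snd)] {e : x ⟶ u}
    {b : y ⟶ u} (he : relComp r (oppRel r) = fiberRel e e)
    (hb : (r.arrow ≫ prod.snd) ≫ b = (r.arrow ≫ prod.fst) ≫ e) : fiberRel e b ≤ r := by
  suffices ∀ {T : D} (f : T ⟶ x) (g : T ⟶ y), f ≫ e = g ≫ b → r.Factors (prod.lift f g) from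
    Subobject.le_of_factors <| (factors_iff_factors_lift _ _).2 <|
      this _ _ (by simpa using fiberRel_condition e b)
  intro T f g hfg
  obtain ⟨T₁, c₁, t, hc₁, ht⟩ := hreg.exists_lift (r.arrow ≫ prod.snd) g
  have hs : (relComp r (oppRel r)).Factors (prod.lift (c₁ ≫ f) (t ≫ r.arrow ≫ prod.fst)) := by
    rw [he, fiberRel_factors_iff]
    calc (c₁ ≫ f) ≫ e = (t ≫ r.arrow ≫ prod.snd) ≫ b := by simp [hfg, reassoc_of% ht]
      _ = (t ≫ r.arrow ≫ prod.fst) ≫ e := by simpa using t ≫= hb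
  obtain ⟨T₂, c₂, m, hc₂, h₁, h₂⟩ := hreg.exists_of_factors_relComp hs
  rw [oppRel_factors_iff] at h₂
  have := hMal.difunctional r h₁ h₂ (by simpa using factors_lift_comp_arrow r (c₂ ≫ t))
  refine factors_of_strongEpi_comp c₁ (factors_of_strongEpi_comp c₂ ?_)
  simpa [ht] using this

theorem exists_eq_fiberRel_of_surjRel (hreg : StrongEpiPullbackStable D) (hMal : IsMaltsev D)
    (hExact : EquivalenceRelationsEffective D) {x y : D} {r : Subobject (x ⨯ y)}
    (hr : SurjRel r) :
    ∃ (u : D) (a : x ⟶ u) (b : y ⟶ u), StrongEpi a ∧ StrongEpi b ∧ r = fiberRel a b := by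
  obtain ⟨hp, hq⟩ := hr
  have hrefl := diag_le_relComp_oppRel r
  obtain ⟨hsymm, htrans⟩ := hMal x _ hrefl
  obtain ⟨u, e, he, hse⟩ := hExact x _ hrefl hsymm htrans
  obtain ⟨b, hb⟩ := hreg.exists_comp_eq (r.arrow ≫ prod.snd) ((r.arrow ≫ prod.fst) ≫ e)
    fun T t₁ t₂ ht => by
      have h := factors_relComp_oppRel (factors_lift_comp_arrow r t₁)
        (by rw [ht]; exact factors_lift_comp_arrow r t₂)
      rw [hse, fiberRel_factors_iff] at h
      simpa using h
  have : StrongEpi b :=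
    have : StrongEpi ((r.arrow ≫ prod.snd) ≫ b) := by rw [hb]; infer_instance
    strongEpi_of_strongEpi (r.arrow ≫ prod.snd) b
  refine ⟨u, e, b, he, this, le_antisymm ?_ (fiberRel_le_of_relComp_oppRel_eq hreg hMal hse hb)⟩
  exact Subobject.le_of_factors <| (factors_iff_factors_lift _ _).2 <|
    (fiberRel_factors_iff _ _ _ _).2 hb.symm

end

/-- In an exact Mal'tsev category, the assignment sending a co-relation (a cospan of strong
epimorphisms `x ↠ u ↞ y`, up to isomorphism) to the fiber product `x ×_u y ⊆ x × y` is a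
bijection onto the set `R(x,y)` of relations with strongly epimorphic projections; its
inverse takes `r` to the pushout `x ⊔_r y`. -/
theorem corelation_fiber_bijection
    (hreg : ∀ ⦃X Y Z : C⦄ (f : X ⟶ Z) (g : Y ⟶ Z),
      StrongEpi f → StrongEpi (pullback.snd f g))
    (hMal : ∀ (z : C) (s : Subobject (z ⨯ z)),
      Subobject.mk (prod.lift (𝟙 z) (𝟙 z)) ≤ s → oppRel s = s ∧ relComp s s = s)
    (hExact : ∀ (z : C) (s : Subobject (z ⨯ z)),
      Subobject.mk (prod.lift (𝟙 z) (𝟙 z)) ≤ s → oppRel s = s → relComp s s = s →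
      ∃ (w : C) (e : z ⟶ w), StrongEpi e ∧ s = fiberRel e e)
    (x y : C) :
    (∀ (u : C) (a : x ⟶ u) (b : y ⟶ u), StrongEpi a → StrongEpi b →
      SurjRel (fiberRel a b)) ∧
    (∀ r : Subobject (x ⨯ y), SurjRel r →
      ∃ (u : C) (a : x ⟶ u) (b : y ⟶ u), StrongEpi a ∧ StrongEpi b ∧
        r = fiberRel a b ∧
        IsPushout (r.arrow ≫ prod.fst) (r.arrow ≫ prod.snd) a b) ∧
    (∀ (u u' : C) (a : x ⟶ u) (b : y ⟶ u) (a' : x ⟶ u') (b' : y ⟶ u'),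
      StrongEpi a → StrongEpi b → StrongEpi a' → StrongEpi b' →
      fiberRel a b = fiberRel a' b' →
      ∃ i : u ≅ u', a ≫ i.hom = a' ∧ b ≫ i.hom = b') := by
  have hreg : StrongEpiPullbackStable C := hreg
  refine ⟨fun u a b _ _ => hreg.surjRel_fiberRel a b, fun r hr => ?_, ?_⟩
  · obtain ⟨u, a, b, ha, hb, rfl⟩ := exists_eq_fiberRel_of_surjRel hreg hMal hExact hr
    exact ⟨u, a, b, ha, hb, rfl, hreg.isPushout_fiberRel a b⟩
  · intro u u' a b a' b' _ _ _ _ h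
    have h₁ := hreg.isPushout_fiberRel a b
    have h₂ := hreg.isPushout_fiberRel a' b'
    rw [← h] at h₂
    exact ⟨h₁.isoIsPushout _ _ h₂, h₁.inl_isoIsPushout_hom _ _ h₂, h₁.inr_isoIsPushout_hom _ _ h₂⟩
end

section
/- In a regular category, for any commutative square with u → x, u → y, x → z, y → z such that the square is a pullback square, the corresponding relational identity holds: ⟨Γ_{a'}⟩∨ ∘ ⟨Γ_{b'}⟩ = ⟨Γ_b⟩ ∘ ⟨Γ_a⟩∨ in the category of relations, where a : u → x, b : u → y are the pullback projections and b' : x → z, a' : y → z the given morphisms (Beck–Chevalley for relations). -/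
open CategoryTheory CategoryTheory.Limits

universe v u

variable {C : Type u} [Category.{v} C] [HasFiniteLimits C] [HasImages C]

/-- The graph `Γ_f ⊆ x × y` of a morphism `f : x ⟶ y`. -/
noncomputable def graphRel {x y : C} (f : x ⟶ y) : Subobject (x ⨯ y) :=
  Subobject.mk (prod.lift (𝟙 x) f)

/-- The image of a mono is the mono itself, as subobjects. -/
lemma mk_image_ι_of_mono' {X Y : C} (f : X ⟶ Y) [Mono f] :
    Subobject.mk (image.ι f) = Subobject.mk f :=
  Subobject.mk_eq_mk_of_comm _ _ (imageMonoIsoSource f) (imageMonoIsoSource_hom_self f)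

/-- If the pullback in the definition of `relComp` is isomorphic to a mono `m` compatibly,
then the composite relation is `m`. -/
lemma relComp_spec {x y z : C} (r : Subobject (x ⨯ y)) (s : Subobject (y ⨯ z))
    {W : C} (m : W ⟶ x ⨯ z) [Mono m]
    (e : pullback (r.arrow ≫ prod.snd) (s.arrow ≫ prod.fst) ≅ W)
    (h : e.hom ≫ m = prod.lift
      (pullback.fst (r.arrow ≫ prod.snd) (s.arrow ≫ prod.fst) ≫ r.arrow ≫ prod.fst)
      (pullback.snd (r.arrow ≫ prod.snd) (s.arrow ≫ prod.fst) ≫ s.arrow ≫ prod.snd)) :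
    relComp r s = Subobject.mk m := by
  haveI hm : Mono (prod.lift
      (pullback.fst (r.arrow ≫ prod.snd) (s.arrow ≫ prod.fst) ≫ r.arrow ≫ prod.fst)
      (pullback.snd (r.arrow ≫ prod.snd) (s.arrow ≫ prod.fst) ≫ s.arrow ≫ prod.snd)) := by
    rw [← h]; exact mono_comp _ _
  rw [relComp, mk_image_ι_of_mono']
  exact Subobject.mk_eq_mk_of_comm _ _ e h

/-- A version of `relComp_spec` phrased in terms of chosen representatives of the
two relations. -/
lemma relComp_spec' {x y z : C} (r : Subobject (x ⨯ y)) (s : Subobject (y ⨯ z))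
    {R S : C} (er : (r : C) ≅ R) (es : (s : C) ≅ S)
    (f₁ : R ⟶ x ⨯ y) (f₂ : S ⟶ y ⨯ z)
    (hr : r.arrow = er.hom ≫ f₁) (hs : s.arrow = es.hom ≫ f₂)
    {W : C} (m : W ⟶ x ⨯ z) [Mono m]
    (e : pullback (f₁ ≫ prod.snd) (f₂ ≫ prod.fst) ≅ W)
    (h : e.hom ≫ m = prod.lift
      (pullback.fst (f₁ ≫ prod.snd) (f₂ ≫ prod.fst) ≫ f₁ ≫ prod.fst)
      (pullback.snd (f₁ ≫ prod.snd) (f₂ ≫ prod.fst) ≫ f₂ ≫ prod.snd)) :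
    relComp r s = Subobject.mk m := by
  have c₁ : (r.arrow ≫ prod.snd) ≫ 𝟙 y = er.hom ≫ (f₁ ≫ prod.snd) := by
    rw [hr]; simp
  have c₂ : (s.arrow ≫ prod.fst) ≫ 𝟙 y = es.hom ≫ (f₂ ≫ prod.fst) := by
    rw [hs]; simp
  have hr' : r.arrow ≫ prod.fst = er.hom ≫ f₁ ≫ prod.fst := by rw [hr, Category.assoc]
  have hs' : s.arrow ≫ prod.snd = es.hom ≫ f₂ ≫ prod.snd := by rw [hs, Category.assoc]
  refine relComp_spec r s m
    (asIso (pullback.map _ _ _ _ er.hom es.hom (𝟙 y) c₁ c₂) ≪≫ e) ?_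
  rw [Iso.trans_hom, asIso_hom, Category.assoc, h]
  apply Limits.prod.hom_ext
  · rw [Category.assoc, prod.lift_fst, prod.lift_fst]
    rw [hr']
    simp [prod.lift_fst, prod.lift_snd, prod.lift_fst_assoc, prod.lift_snd_assoc, pullback.map, pullback.lift_fst, pullback.lift_snd, pullback.lift_fst_assoc, pullback.lift_snd_assoc]
  · rw [Category.assoc, prod.lift_snd, prod.lift_snd]
    rw [hs']
    simp [prod.lift_fst, prod.lift_snd, prod.lift_fst_assoc, prod.lift_snd_assoc, pullback.map, pullback.lift_fst, pullback.lift_snd, pullback.lift_fst_assoc, pullback.lift_snd_assoc]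

/-- The arrow of a graph relation, in terms of its representative. -/
lemma graphRel_arrow {x y : C} (f : x ⟶ y) :
    (graphRel f).arrow
      = (Subobject.underlyingIso (prod.lift (𝟙 x) f)).hom ≫ prod.lift (𝟙 x) f :=
  (Subobject.underlyingIso_hom_comp_eq_mk _).symm

/-- The arrow of the opposite of a graph relation, in terms of its representative. -/
lemma oppRel_graphRel_arrow {x y : C} (f : x ⟶ y) :
    (oppRel (graphRel f)).arrow
      = ((Subobject.underlyingIso ((graphRel f).arrow ≫ (prod.braiding x y).hom)) ≪≫
          (Subobject.underlyingIso (prod.lift (𝟙 x) f))).hom ≫ prod.lift f (𝟙 x) := by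
  have h1 : (oppRel (graphRel f)).arrow
      = (Subobject.underlyingIso ((graphRel f).arrow ≫ (prod.braiding x y).hom)).hom ≫
        ((graphRel f).arrow ≫ (prod.braiding x y).hom) :=
    (Subobject.underlyingIso_hom_comp_eq_mk _).symm
  rw [h1]
  erw [Iso.trans_hom, Category.assoc]
  congr 1
  rw [graphRel_arrow]
  apply Limits.prod.hom_ext
  · erw [Category.assoc, Category.assoc, prod.lift_fst, prod.lift_snd, Category.assoc, prod.lift_fst]
  · erw [Category.assoc, Category.assoc, prod.lift_snd, prod.lift_fst, Category.assoc, prod.lift_snd, Category.comp_id]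

/-- Beck–Chevalley for relations: for a pullback square with projections
`a : u ⟶ x`, `b : u ⟶ y` over the cospan `b' : x ⟶ z`, `a' : y ⟶ z`, one has
`⟨Γ_{a'}⟩∨ ∘ ⟨Γ_{b'}⟩ = ⟨Γ_b⟩ ∘ ⟨Γ_a⟩∨` in the category of relations. -/
theorem relation_beck_chevalley
    (hreg : ∀ ⦃X Y Z : C⦄ (f : X ⟶ Z) (g : Y ⟶ Z),
      StrongEpi f → StrongEpi (pullback.snd f g))
    {u x y z : C} (a : u ⟶ x) (b : u ⟶ y) (b' : x ⟶ z) (a' : y ⟶ z)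
    (hpb : IsPullback a b b' a') :
    relComp (graphRel b') (oppRel (graphRel a')) = relComp (oppRel (graphRel a)) (graphRel b) := by
  haveI hab : Mono (prod.lift a b) := by
    constructor
    intro T g h w
    apply hpb.hom_ext
    · simpa [prod.lift_fst, prod.lift_snd, prod.lift_fst_assoc, prod.lift_snd_assoc] using congrArg (· ≫ (prod.fst : x ⨯ y ⟶ x)) w
    · simpa [prod.lift_fst, prod.lift_snd, prod.lift_fst_assoc, prod.lift_snd_assoc] using congrArg (· ≫ (prod.snd : x ⨯ y ⟶ y)) w
  have h₁ : prod.lift (𝟙 x) b' ≫ (prod.snd : x ⨯ z ⟶ z) = b' := by simp [prod.lift_fst, prod.lift_snd, prod.lift_fst_assoc, prod.lift_snd_assoc]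
  have h₂ : prod.lift a' (𝟙 y) ≫ (prod.fst : z ⨯ y ⟶ z) = a' := by simp [prod.lift_fst, prod.lift_snd, prod.lift_fst_assoc, prod.lift_snd_assoc]
  -- Left-hand side
  have hL : relComp (graphRel b') (oppRel (graphRel a')) = Subobject.mk (prod.lift a b) := by
    refine relComp_spec' (graphRel b') (oppRel (graphRel a'))
      (Subobject.underlyingIso (prod.lift (𝟙 x) b'))
      ((Subobject.underlyingIso ((graphRel a').arrow ≫ (prod.braiding y z).hom)) ≪≫
        (Subobject.underlyingIso (prod.lift (𝟙 y) a')))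
      (prod.lift (𝟙 x) b') (prod.lift a' (𝟙 y))
      (graphRel_arrow b') (oppRel_graphRel_arrow a')
      (prod.lift a b)
      (pullback.congrHom h₁ h₂ ≪≫ hpb.isoPullback.symm) ?_
    apply Limits.prod.hom_ext
    · simp [pullback.congrHom, prod.lift_fst, prod.lift_snd, prod.lift_fst_assoc, prod.lift_snd_assoc, pullback.map, pullback.lift_fst, pullback.lift_snd, pullback.lift_fst_assoc, pullback.lift_snd_assoc]
    · simp [pullback.congrHom, prod.lift_fst, prod.lift_snd, prod.lift_fst_assoc, prod.lift_snd_assoc, pullback.map, pullback.lift_fst, pullback.lift_snd, pullback.lift_fst_assoc, pullback.lift_snd_assoc]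
  -- Right-hand side
  have h₃ : prod.lift a (𝟙 u) ≫ (prod.snd : x ⨯ u ⟶ u) = 𝟙 u := by simp [prod.lift_fst, prod.lift_snd, prod.lift_fst_assoc, prod.lift_snd_assoc]
  have h₄ : prod.lift (𝟙 u) b ≫ (prod.fst : u ⨯ y ⟶ u) = 𝟙 u := by simp [prod.lift_fst, prod.lift_snd, prod.lift_fst_assoc, prod.lift_snd_assoc]
  have hR : relComp (oppRel (graphRel a)) (graphRel b) = Subobject.mk (prod.lift a b) := by
    refine relComp_spec' (oppRel (graphRel a)) (graphRel b)
      ((Subobject.underlyingIso ((graphRel a).arrow ≫ (prod.braiding u x).hom)) ≪≫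
        (Subobject.underlyingIso (prod.lift (𝟙 u) a)))
      (Subobject.underlyingIso (prod.lift (𝟙 u) b))
      (prod.lift a (𝟙 u)) (prod.lift (𝟙 u) b)
      (oppRel_graphRel_arrow a) (graphRel_arrow b)
      (prod.lift a b)
      (pullback.congrHom h₃ h₄ ≪≫ asIso (pullback.fst (𝟙 u) (𝟙 u))) ?_
    have hfs : pullback.fst (prod.lift a (𝟙 u) ≫ (prod.snd : x ⨯ u ⟶ u))
          (prod.lift (𝟙 u) b ≫ (prod.fst : u ⨯ y ⟶ u))
        = pullback.snd (prod.lift a (𝟙 u) ≫ (prod.snd : x ⨯ u ⟶ u))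
          (prod.lift (𝟙 u) b ≫ (prod.fst : u ⨯ y ⟶ u)) := by
      have := pullback.condition (f := prod.lift a (𝟙 u) ≫ (prod.snd : x ⨯ u ⟶ u))
        (g := prod.lift (𝟙 u) b ≫ (prod.fst : u ⨯ y ⟶ u))
      simpa [h₃, h₄] using this
    apply Limits.prod.hom_ext
    · simp [pullback.congrHom, asIso, prod.lift_fst, prod.lift_snd, prod.lift_fst_assoc, prod.lift_snd_assoc, pullback.map, pullback.lift_fst, pullback.lift_snd, pullback.lift_fst_assoc, pullback.lift_snd_assoc]
    · simp [pullback.congrHom, asIso, prod.lift_fst, prod.lift_snd, prod.lift_fst_assoc, prod.lift_snd_assoc, pullback.map, pullback.lift_fst, pullback.lift_snd, pullback.lift_fst_assoc, pullback.lift_snd_assoc]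
      rw [hfs]
  rw [hL, hR]
end
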